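/- arXiv:1903.02121 — 2 statements merged into one kernel-verified Lean document; each statement's English description precedes it below -/
import Mathlib

section
/- Let N ≥ 1 and n be natural numbers, let k_B > 0 and T > 0 be real constants, let X : Fin n → ℝ, E : Fin N → ℝ, and x : Fin N → (Fin n → ℝ). For a strictly positive probability distribution p : Fin N → ℝ (p ω > 0, ∑_ω p ω = 1), the following are equivalent: (i) for every v : Fin N → ℝ with ∑_ω v ω = 0, ∑_ω (E ω − ∑_η X η * x ω η) * v ω = −k_B * T * ∑_ω Real.log (p ω) * v ω; (ii) for every ω, p ω = Real.exp ((∑_η X η * x ω η − E ω) / (k_B * T)) / Z, where Z = ∑_{ω'} Real.exp ((∑_η X η * x ω' η − E ω') / (k_B * T)). In other words, the generalized Boltzmann distribution is the only distribution for which the Gibbs-Shannon entropy equals the thermodynamic entropy. -/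
/-- For a strictly positive probability distribution, the first-law relation with
Gibbs-Shannon entropy (for arbitrary variations of the probabilities) holds if and
only if the distribution is the generalized Boltzmann distribution: the generalized
Boltzmann distribution is the only distribution for which the Gibbs-Shannon entropy
equals the thermodynamic entropy. -/
theorem generalized_boltzmann_iff_first_law_with_gibbs_shannon
    (N n : ℕ) (hN : 1 ≤ N) (kB T : ℝ) (hkB : 0 < kB) (hT : 0 < T)
    (X : Fin n → ℝ) (E : Fin N → ℝ) (x : Fin N → Fin n → ℝ)
    (p : Fin N → ℝ) (hp : ∀ ω, 0 < p ω) (hpsum : ∑ ω, p ω = 1) :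
    (∀ v : Fin N → ℝ, ∑ ω, v ω = 0 →
      ∑ ω, (E ω - ∑ η, X η * x ω η) * v ω =
        -kB * T * ∑ ω, Real.log (p ω) * v ω) ↔
    (∀ ω, p ω = Real.exp ((∑ η, X η * x ω η - E ω) / (kB * T)) /
      (∑ ω', Real.exp ((∑ η, X η * x ω' η - E ω') / (kB * T)))) := by
  have hkT : (0:ℝ) < kB * T := mul_pos hkB hT
  have hNe : Nonempty (Fin N) := ⟨⟨0, hN⟩⟩
  set Z := ∑ ω', Real.exp ((∑ η, X η * x ω' η - E ω') / (kB * T)) with hZ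
  have hZpos : 0 < Z :=
    Finset.sum_pos (fun i _ => Real.exp_pos _) Finset.univ_nonempty
  constructor
  · intro h ω
    have key : ∀ a b : Fin N,
        (E a - ∑ η, X η * x a η) + kB * T * Real.log (p a)
          = (E b - ∑ η, X η * x b η) + kB * T * Real.log (p b) := by
      intro a b
      rcases eq_or_ne a b with rfl | hab
      · rfl
      have hv : ∑ ω', ((Pi.single a 1 - Pi.single b 1 : Fin N → ℝ) ω') = 0 := by
        simp [Finset.sum_sub_distrib, Pi.single_apply]
      have h2 := h _ hv
      simp only [Pi.sub_apply, Pi.single_apply, mul_sub, mul_ite, mul_one, mul_zero,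
        Finset.sum_sub_distrib, Finset.sum_ite_eq', Finset.mem_univ, if_true] at h2
      nlinarith [h2]
    set ω₀ : Fin N := ⟨0, hN⟩
    set c : ℝ := (E ω₀ - ∑ η, X η * x ω₀ η) + kB * T * Real.log (p ω₀) with hc
    have hpω : ∀ ω : Fin N,
        p ω = Real.exp ((∑ η, X η * x ω η - E ω) / (kB * T)) * Real.exp (c / (kB * T)) := by
      intro ω
      have hk := key ω ω₀
      have hlog : Real.log (p ω) = (∑ η, X η * x ω η - E ω) / (kB * T) + c / (kB * T) := by
        rw [hc]
        field_simp
        linarith [hk]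
      rw [← Real.exp_add, ← hlog, Real.exp_log (hp ω)]
    have hsum : Z * Real.exp (c / (kB * T)) = 1 := by
      rw [hZ, Finset.sum_mul, ← hpsum]
      exact Finset.sum_congr rfl fun ω _ => (hpω ω).symm
    have hK : Real.exp (c / (kB * T)) = 1 / Z := by
      field_simp at hsum ⊢
      linarith [hsum]
    rw [hpω ω, hK]
    ring
  · intro h v hv
    have hlog : ∀ ω, Real.log (p ω)
        = (∑ η, X η * x ω η - E ω) / (kB * T) - Real.log Z := by
      intro ω
      rw [h ω, Real.log_div (Real.exp_ne_zero _) (ne_of_gt hZpos), Real.log_exp]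
    have hs : ∑ ω, Real.log (p ω) * v ω
        = ∑ ω, ((∑ η, X η * x ω η - E ω) / (kB * T)) * v ω - Real.log Z * ∑ ω, v ω := by
      rw [Finset.mul_sum, ← Finset.sum_sub_distrib]
      exact Finset.sum_congr rfl fun ω _ => by rw [hlog ω]; ring
    rw [hs, hv, mul_zero, sub_zero, Finset.mul_sum]
    refine Finset.sum_congr rfl fun ω _ => ?_
    field_simp
    ring
end

section
/- Let N ≥ 1 and n be natural numbers, k_B > 0 a real constant, X : Fin n → ℝ, E : Fin N → ℝ, x : Fin N → (Fin n → ℝ), and for each ω ∈ Fin N let f ω : ℝ → ℝ be differentiable with f ω T > 0 for all T. Define Z(T) = ∑_ω f ω T, p ω T = f ω T / Z(T), S(T) = −k_B ∑_ω p ω T * Real.log (p ω T), U(T) = ∑_ω p ω T * E ω, and χ η T = ∑_ω p ω T * x ω η. Then for every T > 0: T * S'(T) − U'(T) + ∑_η X η * (deriv (χ η)) T = −k_B * T * ∑_ω (deriv (fun T => p ω T) T) * (Real.log (f ω T) + (E ω − ∑_η X η * x ω η) / (k_B * T)). In particular, the first-law relation T dS = dU − ∑_η X_η dχ_η under a perturbation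 of T at fixed X and y holds at T if and only if ∑_ω (d/dT p ω T) * [log(f ω T) + (E ω − ∑_η X η x ω η)/(k_B T)] = 0. -/
/-!
Every ensemble average is linear in the probabilities, so its temperature derivative is
`∑ ω, p' ω * (value at ω)`. For the entropy, `(p log p)' = p' (log p + 1)`, and since `∑ ω, p ω = 1`
forces `∑ ω, p' ω = 0`, both the `+ 1` and the `- log Z` in `log p = log f - log Z` drop out,
leaving `S' = -k_B ∑ ω, p' ω * log (f ω)`. Collecting the three derivatives gives the identity,
and the first law holds exactly when its right-hand side vanishes, since `-k_B T ≠ 0`.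
-/

open Finset Real

section Derivatives

variable {ι : Type*} [Fintype ι] {p : ι → ℝ → ℝ} {T : ℝ}

theorem sum_deriv_eq_zero_of_sum_eq_one (hp : ∀ i, DifferentiableAt ℝ (p i) T)
    (hsum : ∀ t, ∑ i, p i t = 1) : ∑ i, deriv (p i) T = 0 := by
  rw [← deriv_fun_sum fun i _ => hp i, funext hsum, deriv_const]

theorem sum_mul_sub_const_of_sum_eq_zero {q : ι → ℝ} (hq : ∑ i, q i = 0) (a : ι → ℝ) (c : ℝ) :
    ∑ i, q i * (a i - c) = ∑ i, q i * a i := by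
  simp only [mul_sub, sum_sub_distrib, ← sum_mul, hq, zero_mul, sub_zero]

theorem hasDerivAt_sum_mul_const (hp : ∀ i, DifferentiableAt ℝ (p i) T) (c : ι → ℝ) :
    HasDerivAt (fun t => ∑ i, p i t * c i) (∑ i, deriv (p i) T * c i) T :=
  HasDerivAt.fun_sum fun i _ => (hp i).hasDerivAt.mul_const (c i)

theorem hasDerivAt_sum_mul_log_of_sum_eq_one (hp : ∀ i, DifferentiableAt ℝ (p i) T)
    (hpT : ∀ i, p i T ≠ 0) (hsum : ∀ t, ∑ i, p i t = 1) :
    HasDerivAt (fun t => ∑ i, p i t * log (p i t)) (∑ i, deriv (p i) T * log (p i T)) T := by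
  have hterm : ∀ i, HasDerivAt (fun t => p i t * log (p i t))
      (deriv (p i) T * (log (p i T) + 1)) T := fun i =>
    ((hasDerivAt_mul_log (hpT i)).comp T (hp i).hasDerivAt).congr_deriv (mul_comm _ _)
  refine (HasDerivAt.fun_sum fun i _ => hterm i).congr_deriv ?_
  simpa using (sum_mul_sub_const_of_sum_eq_zero
    (sum_deriv_eq_zero_of_sum_eq_one hp hsum) (fun i => log (p i T) + 1) 1).symm

end Derivatives

theorem first_law_defect_eq {Ω H : Type*} [Fintype Ω] [Fintype H] {kB T : ℝ} (hkB : kB ≠ 0)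
    (hT : T ≠ 0) (q logf E : Ω → ℝ) (X : H → ℝ) (x : Ω → H → ℝ) :
    T * (-kB * ∑ ω, q ω * logf ω) - ∑ ω, q ω * E ω + ∑ η, X η * ∑ ω, q ω * x ω η =
      -kB * T * ∑ ω, q ω * (logf ω + (E ω - ∑ η, X η * x ω η) / (kB * T)) := by
  have hswap : ∑ η, X η * ∑ ω, q ω * x ω η = ∑ ω, q ω * ∑ η, X η * x ω η := by
    simp only [mul_sum]
    rw [sum_comm]
    exact sum_congr rfl fun ω _ => sum_congr rfl fun η _ => mul_left_comm _ _ _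
  rw [hswap, mul_sum, mul_sum, mul_sum, ← sum_sub_distrib, ← sum_add_distrib]
  refine sum_congr rfl fun ω _ => ?_
  field_simp
  ring

/-- For positive differentiable weights f ω T, probabilities p ω T = f ω T / Z(T),
Gibbs-Shannon entropy S, average energy U and average displacements χ, at any T > 0:
T S'(T) − U'(T) + ∑ η X η (χ η)'(T)
  = −k_B T ∑ ω (d/dT p ω T) [log(f ω T) + (E ω − ∑ η X η x ω η)/(k_B T)].
In particular the first law dU = T dS + ∑ η X η dχ η under a perturbation of T holds
at T iff the bracketed weighted sum vanishes. -/
theorem first_law_iff_weighted_sum_vanishes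
    (N n : ℕ) (hN : 1 ≤ N) (kB : ℝ) (hkB : 0 < kB)
    (X : Fin n → ℝ) (E : Fin N → ℝ) (x : Fin N → Fin n → ℝ)
    (f : Fin N → ℝ → ℝ) (hf : ∀ ω, Differentiable ℝ (f ω))
    (hfpos : ∀ ω T, 0 < f ω T)
    (Z : ℝ → ℝ) (hZ : ∀ T, Z T = ∑ ω, f ω T)
    (p : Fin N → ℝ → ℝ) (hp : ∀ ω T, p ω T = f ω T / Z T)
    (S : ℝ → ℝ) (hS : ∀ T, S T = -kB * ∑ ω, p ω T * Real.log (p ω T))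
    (U : ℝ → ℝ) (hU : ∀ T, U T = ∑ ω, p ω T * E ω)
    (χ : Fin n → ℝ → ℝ) (hχ : ∀ η T, χ η T = ∑ ω, p ω T * x ω η) :
    ∀ T : ℝ, 0 < T →
      (T * deriv S T - deriv U T + ∑ η, X η * deriv (χ η) T =
        -kB * T * ∑ ω, deriv (fun T => p ω T) T *
          (Real.log (f ω T) + (E ω - ∑ η, X η * x ω η) / (kB * T))) ∧
      ((deriv U T = T * deriv S T + ∑ η, X η * deriv (χ η) T) ↔
        ∑ ω, deriv (fun T => p ω T) T *
          (Real.log (f ω T) + (E ω - ∑ η, X η * x ω η) / (kB * T)) = 0) := by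
  intro T hT
  have hZpos (t : ℝ) : 0 < Z t := hZ t ▸
    sum_pos (fun ω _ => hfpos ω t) (univ_nonempty_iff.mpr (Fin.pos_iff_nonempty.mp hN))
  have hpdiff (ω : Fin N) : DifferentiableAt ℝ (p ω) T := by
    rw [funext (hp ω), funext hZ]
    exact ((hf ω).div (Differentiable.fun_sum fun ω _ => hf ω) fun t => hZ t ▸ (hZpos t).ne') T
  have hpsum (t : ℝ) : ∑ ω, p ω t = 1 := by
    simp only [hp, ← sum_div, ← hZ, div_self (hZpos t).ne']
  have hlogp (ω : Fin N) : log (p ω T) = log (f ω T) - log (Z T) := by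
    rw [hp, log_div (hfpos ω T).ne' (hZpos T).ne']
  have dS : deriv S T = -kB * ∑ ω, deriv (p ω) T * log (f ω T) := by
    rw [funext hS, ((hasDerivAt_sum_mul_log_of_sum_eq_one hpdiff
      (fun ω => (hp ω T ▸ div_pos (hfpos ω T) (hZpos T)).ne') hpsum).const_mul (-kB)).deriv]
    simp only [hlogp,
      sum_mul_sub_const_of_sum_eq_zero (sum_deriv_eq_zero_of_sum_eq_one hpdiff hpsum)]
  have dU : deriv U T = ∑ ω, deriv (p ω) T * E ω := by
    rw [funext hU, (hasDerivAt_sum_mul_const hpdiff E).deriv]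
  have dχ (η : Fin n) : deriv (χ η) T = ∑ ω, deriv (p ω) T * x ω η := by
    rw [funext (hχ η), (hasDerivAt_sum_mul_const hpdiff (x · η)).deriv]
  have key := first_law_defect_eq hkB.ne' hT.ne'
    (fun ω => deriv (p ω) T) (fun ω => log (f ω T)) E X x
  rw [← dS, ← dU] at key
  simp only [← dχ] at key
  refine ⟨key, ?_⟩
  rw [← mul_eq_zero_iff_left (mul_ne_zero (neg_ne_zero.mpr hkB.ne') hT.ne'), ← key]
  constructor <;> intro h <;> linarith
end
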